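/- Every ratio-balanced maximum flow is MWSR: if a feasible flow f is a maximum flow and satisfies the ratio constraint, then f minimizes ∑_{j∈A} e_j (r_j^f)² among all feasible flows. -/

import Mathlib

open Finset
open scoped Classical

variable {S A : Type*} [Fintype S] [Fintype A]

/-- A feasible flow: nonnegative on edges, zero off edges, outflow of each security
bounded by its value, inflow of each account bounded by its exposure. -/
def Feasible (E : Finset (S × A)) (v : S → ℝ) (e : A → ℝ) (f : S → A → ℝ) : Prop :=
  (∀ i j, (i, j) ∈ E → 0 ≤ f i j) ∧
  (∀ i j, (i, j) ∉ E → f i j = 0) ∧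
  (∀ i : S, ∑ j ∈ Finset.univ.filter (fun j => (i, j) ∈ E), f i j ≤ v i) ∧
  (∀ j : A, ∑ i ∈ Finset.univ.filter (fun i => (i, j) ∈ E), f i j ≤ e j)

/-- The value of a flow: total flow on all edges. -/
noncomputable def flowValue (E : Finset (S × A)) (f : S → A → ℝ) : ℝ :=
  ∑ p ∈ E, f p.1 p.2

/-- The risk ratio of account `j` under a flow `f`. -/
noncomputable def riskRatio (E : Finset (S × A)) (e : A → ℝ) (f : S → A → ℝ) (j : A) : ℝ :=
  (e j - ∑ i ∈ Finset.univ.filter (fun i => (i, j) ∈ E), f i j) / e j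

/-- A maximum flow: feasible, with value maximal among feasible flows. -/
def IsMaxFlow (E : Finset (S × A)) (v : S → ℝ) (e : A → ℝ) (f : S → A → ℝ) : Prop :=
  Feasible E v e f ∧ ∀ g : S → A → ℝ, Feasible E v e g → flowValue E g ≤ flowValue E f

/-- The ratio constraint: if `f` sends positive flow from `i` to `j` and `i` could
also be used for `l`, then the risk ratio of `j` is at least that of `l`. -/
def RatioConstraint (E : Finset (S × A)) (e : A → ℝ) (f : S → A → ℝ) : Prop :=
  ∀ i j l, (i, j) ∈ E → 0 < f i j → (i, l) ∈ E →
    riskRatio E e f l ≤ riskRatio E e f j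

/-- A ratio-balanced (maximum) flow. -/
def RatioBalanced (E : Finset (S × A)) (v : S → ℝ) (e : A → ℝ) (f : S → A → ℝ) : Prop :=
  IsMaxFlow E v e f ∧ RatioConstraint E e f

/-- The weighted sum of squared risk ratios `∑ j, e j * (r_j^f)^2`. -/
noncomputable def objective (E : Finset (S × A)) (e : A → ℝ) (f : S → A → ℝ) : ℝ :=
  ∑ j : A, e j * (riskRatio E e f j) ^ 2

/-- An MWSR flow: a feasible flow minimizing the weighted sum of squared risk
ratios among all feasible flows. -/
def MWSR (E : Finset (S × A)) (v : S → ℝ) (e : A → ℝ) (f : S → A → ℝ) : Prop :=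
  Feasible E v e f ∧ ∀ g : S → A → ℝ, Feasible E v e g → objective E e f ≤ objective E e g

/-
Let `r` be the risk ratios of `f` and `g` any feasible flow. The objective is convex in the
inflows, so `obj g - obj f ≥ 2 ∑_j r_j (in_f j - in_g j) = 2 ∑_i ∑_j r_j (f_ij - g_ij)`. For each
security `i`, the ratio constraint puts all of `f`'s flow out of `i` on neighbours where `r` is
maximal, and maximality of `f` saturates `i` unless that maximum is `0` (otherwise `f` could be
augmented along an edge). Hence `∑_j r_j g_ij ≤ (max r) v_i = ∑_j r_j f_ij`: `r` is a dual
certificate for `f`.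
-/

noncomputable def outflow (E : Finset (S × A)) (f : S → A → ℝ) (i : S) : ℝ :=
  ∑ j ∈ univ.filter (fun j => (i, j) ∈ E), f i j

noncomputable def inflow (E : Finset (S × A)) (f : S → A → ℝ) (j : A) : ℝ :=
  ∑ i ∈ univ.filter (fun i => (i, j) ∈ E), f i j

theorem sum_mul_inflow (E : Finset (S × A)) (f : S → A → ℝ) (w : A → ℝ) :
    ∑ j, w j * inflow E f j = ∑ i, ∑ j ∈ univ.filter (fun j => (i, j) ∈ E), w j * f i j := by
  simp only [inflow, mul_sum]
  exact Finset.sum_comm' (by simp)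

noncomputable def augment (f : S → A → ℝ) (i : S) (j : A) (ε : ℝ) (i' : S) (j' : A) : ℝ :=
  f i' j' + if (i', j') = (i, j) then ε else 0

theorem sum_mul_le_sum_mul_of_eq_max_on_support {ι : Type*} {s : Finset ι} {r x y : ι → ℝ}
    {ρ c : ℝ} (hρ : 0 ≤ ρ) (hr : ∀ j ∈ s, r j ≤ ρ) (hx : ∀ j ∈ s, x j ≠ 0 → r j = ρ)
    (hy : ∀ j ∈ s, 0 ≤ y j) (hyc : ∑ j ∈ s, y j ≤ c) (hxc : ρ * ∑ j ∈ s, x j = ρ * c) :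
    ∑ j ∈ s, r j * y j ≤ ∑ j ∈ s, r j * x j := calc
  ∑ j ∈ s, r j * y j ≤ ∑ j ∈ s, ρ * y j :=
    sum_le_sum fun j hj => mul_le_mul_of_nonneg_right (hr j hj) (hy j hj)
  _ = ρ * ∑ j ∈ s, y j := (mul_sum _ _ _).symm
  _ ≤ ρ * c := mul_le_mul_of_nonneg_left hyc hρ
  _ = ∑ j ∈ s, ρ * x j := by rw [← hxc, mul_sum]
  _ = ∑ j ∈ s, r j * x j := sum_congr rfl fun j hj => by
    by_cases h : x j = 0
    · simp [h]
    · rw [hx j hj h]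

section Flows

variable {E : Finset (S × A)} {v : S → ℝ} {e : A → ℝ} {f g : S → A → ℝ}

theorem Feasible.riskRatio_nonneg (hf : Feasible E v e f) {j : A} (he : 0 ≤ e j) :
    0 ≤ riskRatio E e f j :=
  div_nonneg (sub_nonneg.2 (hf.2.2.2 j)) he

theorem Feasible.augment (hf : Feasible E v e f) {i : S} {j : A} {ε : ℝ} (hij : (i, j) ∈ E)
    (hε : 0 ≤ ε) (hvi : outflow E f i + ε ≤ v i) (hej : inflow E f j + ε ≤ e j) :
    Feasible E v e (augment f i j ε) := by
  have hout (i' : S) :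
      outflow E (_root_.augment f i j ε) i' = outflow E f i' + if i' = i then ε else 0 := by
    by_cases h : i' = i <;> simp [outflow, _root_.augment, sum_add_distrib, h, hij]
  have hin (j' : A) :
      inflow E (_root_.augment f i j ε) j' = inflow E f j' + if j' = j then ε else 0 := by
    by_cases h : j' = j <;> simp [inflow, _root_.augment, sum_add_distrib, h, hij]
  refine ⟨fun i' j' h => ?_, fun i' j' h => ?_, fun i' => ?_, fun j' => ?_⟩
  · have := hf.1 i' j' h
    simp only [_root_.augment]
    split_ifs <;> linarith
  · have hne : (i', j') ≠ (i, j) := fun h' => h (h' ▸ hij)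
    simp [_root_.augment, hf.2.1 i' j' h, hne]
  · change outflow E _ i' ≤ v i'
    rw [hout]
    split_ifs with h
    · exact h ▸ hvi
    · exact (add_zero _).trans_le (hf.2.2.1 i')
  · change inflow E _ j' ≤ e j'
    rw [hin]
    split_ifs with h
    · exact h ▸ hej
    · exact (add_zero _).trans_le (hf.2.2.2 j')

theorem IsMaxFlow.outflow_eq_or_inflow_eq (hf : IsMaxFlow E v e f) {i : S} {j : A}
    (hij : (i, j) ∈ E) : outflow E f i = v i ∨ inflow E f j = e j := by
  by_contra! h
  have hvi : outflow E f i < v i := (hf.1.2.2.1 i).lt_of_ne h.1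
  have hej : inflow E f j < e j := (hf.1.2.2.2 j).lt_of_ne h.2
  set ε := min (v i - outflow E f i) (e j - inflow E f j)
  have hε : 0 < ε := lt_min (by linarith) (by linarith)
  have hεv : ε ≤ v i - outflow E f i := min_le_left _ _
  have hεe : ε ≤ e j - inflow E f j := min_le_right _ _
  have hle := hf.2 _ (hf.1.augment hij hε.le (by linarith) (by linarith))
  have hvalue : flowValue E (augment f i j ε) = flowValue E f + ε := by
    simp [flowValue, augment, sum_add_distrib, hij]
  rw [hvalue] at hle
  linarith

theorem IsMaxFlow.riskRatio_eq_zero_of_outflow_lt (hf : IsMaxFlow E v e f) {i : S} {j : A}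
    (hij : (i, j) ∈ E) (hlt : outflow E f i < v i) : riskRatio E e f j = 0 := by
  have hin : inflow E f j = e j := (hf.outflow_eq_or_inflow_eq hij).resolve_left hlt.ne
  rw [riskRatio, ← inflow, hin, sub_self, zero_div]

theorem RatioBalanced.sum_riskRatio_mul_le (he : ∀ j, 0 ≤ e j) (hf : RatioBalanced E v e f)
    (hg : Feasible E v e g) (i : S) :
    ∑ j ∈ univ.filter (fun j => (i, j) ∈ E), riskRatio E e f j * g i j ≤
      ∑ j ∈ univ.filter (fun j => (i, j) ∈ E), riskRatio E e f j * f i j := by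
  obtain ⟨hmax, hratio⟩ := hf
  set N := univ.filter (fun j => (i, j) ∈ E)
  have hN : ∀ {j}, j ∈ N ↔ (i, j) ∈ E := by simp [N]
  rcases N.eq_empty_or_nonempty with hempty | hne
  · simp [hempty]
  obtain ⟨j₀, hj₀, hj₀max⟩ := exists_max_image N (riskRatio E e f) hne
  refine sum_mul_le_sum_mul_of_eq_max_on_support (hmax.1.riskRatio_nonneg (he j₀)) hj₀max
    (fun j hj hfij => ?_) (fun j hj => hg.1 i j (hN.1 hj)) (hg.2.2.1 i) ?_
  · have hpos : 0 < f i j := (hmax.1.1 i j (hN.1 hj)).lt_of_ne' hfij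
    exact (hj₀max j hj).antisymm (hratio i j j₀ (hN.1 hj) hpos (hN.1 hj₀))
  · rcases (hmax.1.2.2.1 i).lt_or_eq with hlt | heq
    · simp [hmax.riskRatio_eq_zero_of_outflow_lt (hN.1 hj₀) hlt]
    · exact congrArg _ heq

theorem two_mul_sum_riskRatio_mul_sub_inflow_le (he : ∀ j, 0 < e j) :
    2 * ∑ j, riskRatio E e f j * (inflow E f j - inflow E g j) ≤
      objective E e g - objective E e f := by
  have hconvex (j : A) : 2 * (riskRatio E e f j * (inflow E f j - inflow E g j)) ≤
      e j * riskRatio E e g j ^ 2 - e j * riskRatio E e f j ^ 2 := by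
    have hdiff : inflow E f j - inflow E g j = e j * (riskRatio E e g j - riskRatio E e f j) := by
      simp only [riskRatio, inflow]
      field_simp [(he j).ne']
      ring
    rw [hdiff]
    nlinarith [mul_nonneg (he j).le (sq_nonneg (riskRatio E e g j - riskRatio E e f j))]
  rw [objective, objective, mul_sum, ← sum_sub_distrib]
  exact sum_le_sum fun j _ => hconvex j

end Flows

theorem ratioBalanced_mwsr_general (E : Finset (S × A)) (v : S → ℝ) (e : A → ℝ)
    (he : ∀ j, 0 < e j)
    (f : S → A → ℝ) (hf : RatioBalanced E v e f) :
    MWSR E v e f := by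
  refine ⟨hf.1.1, fun g hg => ?_⟩
  have hdual : 0 ≤ ∑ j, riskRatio E e f j * (inflow E f j - inflow E g j) := by
    simp only [mul_sub, sum_sub_distrib]
    rw [sum_mul_inflow, sum_mul_inflow, sub_nonneg]
    exact sum_le_sum fun i _ => hf.sum_riskRatio_mul_le (fun j => (he j).le) hg i
  linarith [two_mul_sum_riskRatio_mul_sub_inflow_le (E := E) (f := f) (g := g) he]

/-- Every ratio-balanced maximum flow is MWSR. -/
theorem ratioBalanced_mwsr (E : Finset (S × A)) (v : S → ℝ) (e : A → ℝ)
    (hv : ∀ i, 0 ≤ v i) (he : ∀ j, 0 < e j)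
    (f : S → A → ℝ) (hf : RatioBalanced E v e f) :
    MWSR E v e f :=
  ratioBalanced_mwsr_general E v e he f hf
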